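/- Let M be an MEC, let C be an undirected connected component of M, let u—v be an undirected edge of C, and let x→u be a directed edge of M. Then x→v is a directed edge of M. -/

import Mathlib

/-! Common definitions: mixed graphs, Markov equivalence classes (MECs),
partial MECs, projections, extensions, and counting classes. -/

/-- A mixed graph on a vertex type `V`: an irreflexive edge relation. -/
structure MixedGraph (V : Type*) where
  E : V → V → Prop
  irrefl : ∀ v, ¬ E v v

namespace MixedGraph

variable {V : Type*}

/-- `u — v` : undirected edge of `M`. -/
def undirE (M : MixedGraph V) (u v : V) : Prop := M.E u v ∧ M.E v u

/-- `u → v` : directed edge of `M`. -/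
def dirE (M : MixedGraph V) (u v : V) : Prop := M.E u v ∧ ¬ M.E v u

/-- `u` and `v` are adjacent in `M` (joined by some edge). -/
def adjE (M : MixedGraph V) (u v : V) : Prop := M.E u v ∨ M.E v u

/-- The skeleton of a mixed graph: replace every directed edge by an undirected one. -/
def skeleton (M : MixedGraph V) : SimpleGraph V where
  Adj u v := M.adjE u v
  symm := by
    constructor
    intro u v h
    exact Or.symm h
  loopless := by
    constructor
    intro v h
    rcases h with h | h <;> exact M.irrefl v h

/-- The undirected part of a mixed graph, as a simple graph. -/
def undirGraph (M : MixedGraph V) : SimpleGraph V where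
  Adj u v := M.undirE u v
  symm := by
    constructor
    intro u v h
    exact ⟨h.2, h.1⟩
  loopless := by
    constructor
    intro v h
    exact M.irrefl v h.1

/-- `M` is a chain graph: no directed cycle, i.e. no cycle
`u_1, …, u_l, u_1` (`l ≥ 2`, vertices distinct) in which every consecutive pair is joined
by an undirected or forward-directed edge and at least one edge is directed. -/
def IsChainGraph (M : MixedGraph V) : Prop :=
  ∀ (l : ℕ) (f : ZMod l → V), 2 ≤ l → Function.Injective f →
    (∀ i, M.E (f i) (f (i + 1))) → ∀ i, ¬ M.dirE (f i) (f (i + 1))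

/-- `a → b ← c` is a v-structure of `M` (in particular `a`, `c` non-adjacent). -/
def vstruct (M : MixedGraph V) (a b c : V) : Prop :=
  M.dirE a b ∧ M.dirE c b ∧ ¬ M.adjE a c

/-- The set of v-structures of `M`, as ordered triples `(a, b, c)` with `a → b ← c`. -/
def vstructs (M : MixedGraph V) : Set (V × V × V) :=
  {t | M.vstruct t.1 t.2.1 t.2.2}

/-- The directed edge `u → v` is strongly protected in `M`: it occurs in an induced
subgraph of one of the four forms (a) `w→u→v` (`w`,`v` non-adjacent);
(b) `u→v←w` (`u`,`w` non-adjacent); (c) `u→w`, `w→v`, `u→v`;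
(d) `w→v`, `w'→v`, `w—u`, `w'—u`, `u→v` (`w`,`w'` non-adjacent). -/
def StronglyProtected (M : MixedGraph V) (u v : V) : Prop :=
  (∃ w, M.dirE w u ∧ ¬ M.adjE w v) ∨
  (∃ w, M.dirE w v ∧ ¬ M.adjE u w) ∨
  (∃ w, M.dirE u w ∧ M.dirE w v) ∨
  (∃ w w', w ≠ w' ∧ M.undirE w u ∧ M.undirE w' u ∧ M.dirE w v ∧ M.dirE w' v ∧
    ¬ M.adjE w w')

/-- The induced mixed subgraph of `M` on the vertex set `X`, kept on the same vertex
type (vertices outside `X` become isolated). -/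
def induce (M : MixedGraph V) (X : Set V) : MixedGraph V where
  E u v := u ∈ X ∧ v ∈ X ∧ M.E u v
  irrefl := by
    intro v h
    exact M.irrefl v h.2.2

end MixedGraph

namespace SimpleGraph

variable {V : Type*}

/-- A simple graph is chordal: every cycle of length at least `4` has a chord
(an edge between two non-consecutive vertices of the cycle). -/
def IsChordalGraph (G : SimpleGraph V) : Prop :=
  ∀ (l : ℕ) (f : ZMod l → V), 4 ≤ l → Function.Injective f →
    (∀ i, G.Adj (f i) (f (i + 1))) →
    ∃ i j : ZMod l, j ≠ i + 1 ∧ i ≠ j + 1 ∧ G.Adj (f i) (f j)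

/-- The induced subgraph of `G` on the vertex set `X`, kept on the same vertex type
(vertices outside `X` become isolated). -/
def inducedOn (G : SimpleGraph V) (X : Set V) : SimpleGraph V where
  Adj u v := u ∈ X ∧ v ∈ X ∧ G.Adj u v
  symm := by
    constructor
    intro u v h
    exact ⟨h.2.1, h.1, h.2.2.symm⟩
  loopless := by
    constructor
    intro v h
    exact G.loopless.irrefl v h.2.2

/-- The set of neighbours in `G` of vertices of `S`. -/
def nbhdSet (G : SimpleGraph V) (S : Set V) : Set V :=
  {v | ∃ u ∈ S, G.Adj u v}

/-- View an undirected graph as a mixed graph all of whose edges are undirected. -/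
def toMixed (G : SimpleGraph V) : MixedGraph V :=
  ⟨G.Adj, fun v h => G.irrefl h⟩

end SimpleGraph

namespace MixedGraph

variable {V : Type*}

/-- `M` is (the graphical representation of) a Markov equivalence class, by the
Andersson–Madigan–Perlman characterization: (1) `M` is a chain graph; (2) every
undirected connected component of `M` is chordal; (3) `M` has no induced subgraph
`a→b—c`; (4) every directed edge of `M` is strongly protected. -/
def IsMEC (M : MixedGraph V) : Prop :=
  M.IsChainGraph ∧
  M.undirGraph.IsChordalGraph ∧
  (∀ a b c, M.dirE a b → M.undirE b c → M.adjE a c) ∧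
  (∀ u v, M.dirE u v → M.StronglyProtected u v)

/-- `M` is a partial MEC: conditions (1)–(3) of the MEC characterization. -/
def IsPartialMEC (M : MixedGraph V) : Prop :=
  M.IsChainGraph ∧
  M.undirGraph.IsChordalGraph ∧
  (∀ a b c, M.dirE a b → M.undirE b c → M.adjE a c)

end MixedGraph

/-- `MEC(G)` : the set of MECs with skeleton `G`. -/
def MECset {V : Type*} (G : SimpleGraph V) : Set (MixedGraph V) :=
  {M | M.IsMEC ∧ M.skeleton = G}

/-- `PMEC(G)` : the set of partial MECs with skeleton `G`. -/
def PMECset {V : Type*} (G : SimpleGraph V) : Set (MixedGraph V) :=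
  {M | M.IsPartialMEC ∧ M.skeleton = G}

/-- `M' = P(M, Y)` : `M'` is the projection of `M` on the vertex set `Y`, i.e. the
(unique) MEC of the induced subgraph on `Y` whose set of v-structures equals that
of `M[Y]`. -/
def IsProjection {V : Type*} (M : MixedGraph V) (Y : Set V) (M' : MixedGraph V) : Prop :=
  M' ∈ MECset (M.skeleton.inducedOn Y) ∧ M'.vstructs = (M.induce Y).vstructs

/-- `MEC(G, r, 1)` : MECs of `G` that contain a directed edge into `r`. -/
def MEC1 {V : Type*} (G : SimpleGraph V) (r : V) : Set (MixedGraph V) :=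
  {M ∈ MECset G | ∃ x, M.dirE x r}

/-- `MEC(G, r, 0, i)` : MECs of `G` with no directed edge into `r` and exactly `i`
undirected edges incident to `r`. -/
def MEC0 {V : Type*} (G : SimpleGraph V) (r : V) (i : ℕ) : Set (MixedGraph V) :=
  {M ∈ MECset G | (¬ ∃ x, M.dirE x r) ∧ {x | M.undirE r x}.ncard = i}

/-- The degree of `r` in `G`. -/
noncomputable def degS {V : Type*} (G : SimpleGraph V) (r : V) : ℕ :=
  {x | G.Adj r x}.ncard

/-- `n_1(G, r) = |MEC(G, r, 1)|`. -/
noncomputable def n1count {V : Type*} (G : SimpleGraph V) (r : V) : ℕ :=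
  (MEC1 G r).ncard

/-- `n_0^i(G, r) = |MEC(G, r, 0, i)|`. -/
noncomputable def n0count {V : Type*} (G : SimpleGraph V) (r : V) (i : ℕ) : ℕ :=
  (MEC0 G r i).ncard

/-- `n_0(G, r) = Σ_{i = 0}^{δ} n_0^i(G, r)`, where `δ` is the degree of `r` in `G`. -/
noncomputable def n0total {V : Type*} (G : SimpleGraph V) (r : V) : ℕ :=
  ∑ i ∈ Finset.range (degS G r + 1), n0count G r i

/-- The set of vertices lying on the `r1` side after cutting the edge `r1 — r2` of `G`
(i.e. the vertices reachable from `r1` in `G` with the edge `r1 — r2` deleted). -/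
def cutSide {V : Type*} (G : SimpleGraph V) (r1 r2 : V) : Set V :=
  {v | (G.deleteEdges {s(r1, r2)}).Reachable r1 v}

/-- `MEC(G, O)` : the MECs of `G` whose induced subgraph on `X` (the vertex set of
`O`) equals `O`. -/
def MECwith {V : Type*} (G : SimpleGraph V) (O : MixedGraph V) (X : Set V) :
    Set (MixedGraph V) :=
  {M ∈ MECset G | M.induce X = O}

/-- `O ∈ E(O1, O2)` : `O` is an extension of `(O1, O2)` (where `X1`, `X2` are the
vertex sets of `O1`, `O2`): for each `a ∈ {1,2}`, (i) every directed edge of `O_a` is a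
directed edge of `O`; (ii) `V(O_a) = V(O[V_{O_a}])`; (iii) every undirected edge of
`O_a` that is directed in `O` is strongly protected in `O`. -/
def IsExtension {V : Type*} (O O1 O2 : MixedGraph V) (X1 X2 : Set V) : Prop :=
  (∀ u v, O1.dirE u v → O.dirE u v) ∧
  (∀ u v, O2.dirE u v → O.dirE u v) ∧
  O1.vstructs = (O.induce X1).vstructs ∧
  O2.vstructs = (O.induce X2).vstructs ∧
  (∀ u v, O1.undirE u v → O.dirE u v → O.StronglyProtected u v) ∧
  (∀ u v, O2.undirE u v → O.dirE u v → O.StronglyProtected u v)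

/-- The v-structure (recorded as the ordered triple `t = (a, b, c)` with `a → b ← c`)
contains the directed edge `x → y`. -/
def vstructContains {V : Type*} (t : V × V × V) (x y : V) : Prop :=
  (t.1 = x ∧ t.2.1 = y) ∨ (t.2.2 = x ∧ t.2.1 = y)

namespace MixedGraph

variable {V : Type*}

theorem IsChainGraph.not_E_of_dirE_of_E {M : MixedGraph V} (hM : M.IsChainGraph) {a b c : V}
    (hab : M.dirE a b) (hbc : M.E b c) : ¬ M.E c a := by
  intro hca
  have hab' : a ≠ b := by rintro rfl; exact M.irrefl a hab.1
  have hbc' : b ≠ c := by rintro rfl; exact M.irrefl b hbc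
  have hca' : c ≠ a := by rintro rfl; exact M.irrefl c hca
  have hinj : Function.Injective (![a, b, c] : ZMod 3 → V) := by
    intro i j hij
    fin_cases i <;> fin_cases j <;> simp_all
  refine hM 3 ![a, b, c] (by norm_num) hinj (fun i => ?_) 0 hab
  fin_cases i
  exacts [hab.1, hbc, hca]

end MixedGraph

theorem directed_into_component_edge_general {V : Type*}
    (M : MixedGraph V) (hM : M.IsMEC) (u v x : V)
    (huv : M.undirE u v) (hxu : M.dirE x u) : M.dirE x v := by
  obtain ⟨hchain, -, hno_flag, -⟩ := hM
  have hvx : ¬ M.E v x := hchain.not_E_of_dirE_of_E hxu huv.1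
  exact ⟨(hno_flag x u v hxu huv).resolve_right hvx, hvx⟩

theorem directed_into_component_edge {V : Type*} [Fintype V] [DecidableEq V]
    (M : MixedGraph V) (hM : M.IsMEC) (u v x : V)
    (huv : M.undirE u v) (hxu : M.dirE x u) : M.dirE x v :=
  directed_into_component_edge_general M hM u v x huv hxu
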